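/- arXiv:2107.14193 — 2 statements merged into one kernel-verified Lean document; each statement's English description precedes it below -/
import Mathlib

section
/- Fix a real number c, and for each integer n ≥ 2 let m = ⌊c(n−1)⌋. If 0 < c ≤ 1, then lim_{n→∞} C_m(n,n,n)/n² = c²/2 and lim_{n→∞} S_m(n,n,n)/n³ = c³/6. If 1 < c ≤ 3/2, then lim_{n→∞} C_m(n,n,n)/n² = −c² + 3c − 3/2 and lim_{n→∞} S_m(n,n,n)/n³ = −c³/3 + 3c²/2 − 3c/2 + 1/2. -/
open Filter

/-- `C_m(a,b,c)`: the number of triples `(x, y, z)` with `0 ≤ x ≤ a - 1`,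
`0 ≤ y ≤ b - 1`, `0 ≤ z ≤ c - 1`, and `x + y + z = m`. -/
def C3 (a b c m : ℕ) : ℕ :=
  Fintype.card {p : Fin a × Fin b × Fin c // (p.1 : ℕ) + (p.2.1 : ℕ) + (p.2.2 : ℕ) = m}

/-- `S_m(a,b,c)`: the number of triples `(x, y, z)` with `0 ≤ x ≤ a - 1`,
`0 ≤ y ≤ b - 1`, `0 ≤ z ≤ c - 1`, and `x + y + z ≤ m`. -/
def S3 (a b c m : ℕ) : ℕ :=
  Fintype.card {p : Fin a × Fin b × Fin c // (p.1 : ℕ) + (p.2.1 : ℕ) + (p.2.2 : ℕ) ≤ m}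

/-!
The slices of the cube have generating function
`(1 + X + ⋯ + X ^ (n - 1)) ^ 3 = (1 - X ^ n) ^ 3 / (1 - X) ^ 3`, and one more factor `1 / (1 - X)`
turns slice counts into the partial sums `S_m`. For `m < 2n` only the part `1 - 3 X ^ n` of
`(1 - X ^ n) ^ 3` reaches degree `m`, so
`C_m = (m+2 choose 2) - 3 (m+2-n choose 2)` and `S_m = (m+3 choose 3) - 3 (m+3-n choose 3)`,
with truncated subtraction absorbing the case `m < n`. As `(a choose k) ~ a ^ k / k!`,
`m / n → c` and `(m + k - n) / n → max (c - 1) 0`, the normalised counts tend to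
`(c ^ k - 3 max (c - 1) 0 ^ k) / k!` for `k = 2, 3` whenever `0 ≤ c ≤ 2`.
-/

open Finset PowerSeries

section GeneratingFunction

variable {R : Type*} [CommRing R]

theorem card_subtype_eq_eq_coeff {α : Type*} [Fintype α] (f : α → ℕ) (m : ℕ) :
    (Fintype.card {a // f a = m} : R) = coeff m (∑ a, (X : R⟦X⟧) ^ f a) := by
  simp [Fintype.card_subtype, map_sum, coeff_X_pow, eq_comm]

theorem card_subtype_le_eq_coeff {α : Type*} [Fintype α] (f : α → ℕ) (m : ℕ) :
    (Fintype.card {a // f a ≤ m} : R)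
      = coeff m ((∑ a, (X : R⟦X⟧) ^ f a) * (invOneSubPow R 1 : R⟦X⟧)) := by
  simp [Fintype.card_subtype, sum_mul, map_sum, coeff_X_pow_mul',
    invOneSubPow_val_succ_eq_mk_add_choose]

theorem sum_fin_cube_X_pow_eq (n : ℕ) :
    ∑ p : Fin n × Fin n × Fin n, (X : R⟦X⟧) ^ ((p.1 : ℕ) + p.2.1 + p.2.2)
      = (∑ i ∈ range n, X ^ i) ^ 3 := by
  simp only [Fintype.sum_prod_type, pow_add, ← mul_sum, ← sum_mul,
    Fin.sum_univ_eq_sum_range (fun i => (X : R⟦X⟧) ^ i)]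
  ring

theorem geom_sum_X_pow_pow_eq (n d : ℕ) :
    (∑ i ∈ range n, (X : R⟦X⟧) ^ i) ^ d = (1 - X ^ n) ^ d * (invOneSubPow R d : R⟦X⟧) := by
  rw [← geom_sum_mul_neg, mul_pow, mul_assoc, ← invOneSubPow_inv_eq_one_sub_pow,
    Units.inv_eq_val_inv, Units.inv_mul, mul_one]

theorem coeff_one_sub_X_pow_cube_mul_invOneSubPow {n k m : ℕ} (hk : 0 < k) (hm : m < 2 * n) :
    coeff m ((1 - X ^ n) ^ 3 * (invOneSubPow R (k + 1) : R⟦X⟧))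
      = ((m + k).choose k : R) - 3 * ((m + k - n).choose k : R) := by
  have hcube : (1 - X ^ n : R⟦X⟧) ^ 3 = 1 - 3 • X ^ n + 3 • X ^ (2 * n) - X ^ (3 * n) := by
    ring
  have hcoeff (j : ℕ) : coeff j (invOneSubPow R (k + 1) : R⟦X⟧) = ((k + j).choose k : R) := by
    rw [invOneSubPow_val_succ_eq_mk_add_choose, coeff_mk]
  rw [hcube, sub_mul, add_mul, sub_mul, one_mul, smul_mul_assoc, smul_mul_assoc, map_sub, map_add,
    map_sub, map_nsmul, map_nsmul, coeff_X_pow_mul' _ (2 * n), coeff_X_pow_mul' _ (3 * n),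
    if_neg (by omega), if_neg (by omega), coeff_X_pow_mul', hcoeff, add_comm k m]
  split_ifs with hnm
  · rw [hcoeff, show k + (m - n) = m + k - n by omega]
    simp
  · rw [Nat.choose_eq_zero_of_lt (by omega : m + k - n < k)]
    simp

theorem C3_self_eq_choose_sub {n m : ℕ} (hm : m < 2 * n) :
    (C3 n n n m : R) = ((m + 2).choose 2 : R) - 3 * ((m + 2 - n).choose 2 : R) := by
  rw [C3, card_subtype_eq_eq_coeff, sum_fin_cube_X_pow_eq, geom_sum_X_pow_pow_eq,
    coeff_one_sub_X_pow_cube_mul_invOneSubPow two_pos hm]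

theorem S3_self_eq_choose_sub {n m : ℕ} (hm : m < 2 * n) :
    (S3 n n n m : R) = ((m + 3).choose 3 : R) - 3 * ((m + 3 - n).choose 3 : R) := by
  rw [S3, card_subtype_le_eq_coeff, sum_fin_cube_X_pow_eq, geom_sum_X_pow_pow_eq, mul_assoc,
    ← Units.val_mul, ← invOneSubPow_add, coeff_one_sub_X_pow_cube_mul_invOneSubPow three_pos hm]

end GeneratingFunction

open scoped Topology Nat

section Asymptotics

theorem natCast_tsub_eq_max {K : Type*} [Ring K] [LinearOrder K] [IsStrictOrderedRing K]
    (a b : ℕ) : ((a - b : ℕ) : K) = max ((a : K) - b) 0 := by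
  rcases le_total b a with h | h
  · rw [Nat.cast_sub h, max_eq_left (sub_nonneg.2 (Nat.cast_le.2 h))]
  · rw [Nat.sub_eq_zero_of_le h, Nat.cast_zero, max_eq_right (sub_nonpos.2 (Nat.cast_le.2 h))]

variable {a b : ℕ → ℕ} {s t : ℝ}

theorem tendsto_natCast_tsub_div (ha : Tendsto (fun n => (a n : ℝ) / n) atTop (𝓝 s))
    (hb : Tendsto (fun n => (b n : ℝ) / n) atTop (𝓝 t)) :
    Tendsto (fun n => ((a n - b n : ℕ) : ℝ) / n) atTop (𝓝 (max (s - t) 0)) := by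
  have h := (ha.sub hb).max (tendsto_const_nhds (x := (0 : ℝ)))
  refine h.congr fun n => ?_
  rw [natCast_tsub_eq_max, ← sub_div, ← zero_div (n : ℝ), max_div_div_right (Nat.cast_nonneg n),
    zero_div]

theorem tendsto_natCast_add_div (k : ℕ) (ha : Tendsto (fun n => (a n : ℝ) / n) atTop (𝓝 s)) :
    Tendsto (fun n => ((a n + k : ℕ) : ℝ) / n) atTop (𝓝 s) := by
  have h := ha.add (tendsto_const_div_atTop_nhds_zero_nat (k : ℝ))
  rw [add_zero] at h
  exact h.congr fun n => by push_cast; rw [add_div]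

theorem tendsto_choose_div_pow (ha : Tendsto (fun n => (a n : ℝ) / n) atTop (𝓝 t)) (k : ℕ) :
    Tendsto (fun n => ((a n).choose k : ℝ) / (n : ℝ) ^ k) atTop (𝓝 (t ^ k / k !)) := by
  have ht : 0 ≤ t := ge_of_tendsto' ha fun n => by positivity
  have hlow : Tendsto (fun n => ((a n + 1 - k : ℕ) : ℝ) / n) atTop (𝓝 t) := by
    have h := tendsto_natCast_tsub_div (b := fun _ => k) (tendsto_natCast_add_div 1 ha)
      (tendsto_const_div_atTop_nhds_zero_nat (k : ℝ))
    rwa [sub_zero, max_eq_left ht] at h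
  refine tendsto_of_tendsto_of_tendsto_of_le_of_le ((hlow.pow k).div_const (k ! : ℝ))
    ((ha.pow k).div_const (k ! : ℝ)) (fun n => ?_) (fun n => ?_)
  · simp only [div_pow, div_right_comm _ ((n : ℝ) ^ k)]
    gcongr
    exact Nat.pow_le_choose k (a n)
  · simp only [div_pow, div_right_comm _ ((n : ℝ) ^ k)]
    gcongr
    exact Nat.choose_le_pow_div k (a n)

theorem tendsto_choose_sub_choose_div_pow (ha : Tendsto (fun n => (a n : ℝ) / n) atTop (𝓝 s))
    (k : ℕ) :
    Tendsto (fun n => (((a n + k).choose k : ℝ) - 3 * ((a n + k - n).choose k : ℝ)) / (n : ℝ) ^ k)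
      atTop (𝓝 ((s ^ k - 3 * max (s - 1) 0 ^ k) / k !)) := by
  have hself : Tendsto (fun n : ℕ => (n : ℝ) / n) atTop (𝓝 1) :=
    tendsto_const_nhds.congr' <| (eventually_ne_atTop 0).mono fun n hn => by simp [hn]
  have hk := tendsto_natCast_add_div k ha
  have h := (tendsto_choose_div_pow hk k).sub
    ((tendsto_choose_div_pow (tendsto_natCast_tsub_div hk hself) k).const_mul 3)
  rw [← mul_div_assoc, ← sub_div] at h
  exact h.congr fun n => by rw [sub_div, mul_div_assoc]

theorem tendsto_floor_mul_sub_one_div {c : ℝ} (hc : 0 ≤ c) :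
    Tendsto (fun n : ℕ => (⌊c * ((n : ℝ) - 1)⌋₊ : ℝ) / n) atTop (𝓝 c) := by
  have hfloor : Tendsto (fun n : ℕ => (⌊c * ((n : ℝ) - 1)⌋₊ : ℝ) / ((n : ℝ) - 1)) atTop (𝓝 c) :=
    (tendsto_nat_floor_mul_div_atTop hc).comp
      (tendsto_atTop_add_const_right _ (-1) tendsto_natCast_atTop_atTop)
  have hratio : Tendsto (fun n : ℕ => ((n : ℝ) - 1) / n) atTop (𝓝 1) := by
    have h := (tendsto_const_nhds (x := (1 : ℝ))).sub (tendsto_const_div_atTop_nhds_zero_nat (1 : ℝ))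
    rw [sub_zero] at h
    refine h.congr' <| (eventually_ne_atTop 0).mono fun n hn => ?_
    simp [sub_div, hn]
  have h := hfloor.mul hratio
  rw [mul_one] at h
  refine h.congr' <| (eventually_ge_atTop 2).mono fun n hn => div_mul_div_cancel₀ ?_
  have : (2 : ℝ) ≤ n := by exact_mod_cast hn
  linarith

theorem floor_mul_sub_one_lt_two_mul {c : ℝ} (hc0 : 0 ≤ c) (hc : c ≤ 2) {n : ℕ} (hn : 1 ≤ n) :
    ⌊c * ((n : ℝ) - 1)⌋₊ < 2 * n := by
  have hn' : (1 : ℝ) ≤ n := by exact_mod_cast hn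
  rw [Nat.floor_lt (by nlinarith)]
  push_cast
  nlinarith

theorem tendsto_C3_floor_div {c : ℝ} (hc0 : 0 ≤ c) (hc : c ≤ 2) :
    Tendsto (fun n : ℕ => (C3 n n n ⌊c * ((n : ℝ) - 1)⌋₊ : ℝ) / (n : ℝ) ^ 2) atTop
      (𝓝 ((c ^ 2 - 3 * max (c - 1) 0 ^ 2) / 2)) := by
  have h := tendsto_choose_sub_choose_div_pow (tendsto_floor_mul_sub_one_div hc0) 2
  rw [show ((2 ! : ℕ) : ℝ) = 2 by norm_num [Nat.factorial]] at h
  refine h.congr' <| (eventually_ge_atTop 1).mono fun n hn => ?_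
  dsimp only
  rw [C3_self_eq_choose_sub (floor_mul_sub_one_lt_two_mul hc0 hc hn)]

theorem tendsto_S3_floor_div {c : ℝ} (hc0 : 0 ≤ c) (hc : c ≤ 2) :
    Tendsto (fun n : ℕ => (S3 n n n ⌊c * ((n : ℝ) - 1)⌋₊ : ℝ) / (n : ℝ) ^ 3) atTop
      (𝓝 ((c ^ 3 - 3 * max (c - 1) 0 ^ 3) / 6)) := by
  have h := tendsto_choose_sub_choose_div_pow (tendsto_floor_mul_sub_one_div hc0) 3
  rw [show ((3 ! : ℕ) : ℝ) = 6 by norm_num [Nat.factorial]] at h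
  refine h.congr' <| (eventually_ge_atTop 1).mono fun n hn => ?_
  dsimp only
  rw [S3_self_eq_choose_sub (floor_mul_sub_one_lt_two_mul hc0 hc hn)]

end Asymptotics

/-- Fix a real `c` and, for each `n ≥ 2`, let `m = ⌊c(n-1)⌋`.
If `0 < c ≤ 1` then `C_m(n,n,n)/n² → c²/2` and `S_m(n,n,n)/n³ → c³/6`;
if `1 < c ≤ 3/2` then `C_m(n,n,n)/n² → -c² + 3c - 3/2` and
`S_m(n,n,n)/n³ → -c³/3 + 3c²/2 - 3c/2 + 1/2`. -/
theorem slice_counts_cube (c : ℝ) :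
    ((0 < c ∧ c ≤ 1) →
      Tendsto (fun n : ℕ => (C3 n n n ⌊c * ((n : ℝ) - 1)⌋₊ : ℝ) / (n : ℝ) ^ 2) atTop
          (nhds (c ^ 2 / 2)) ∧
      Tendsto (fun n : ℕ => (S3 n n n ⌊c * ((n : ℝ) - 1)⌋₊ : ℝ) / (n : ℝ) ^ 3) atTop
          (nhds (c ^ 3 / 6))) ∧
    ((1 < c ∧ c ≤ 3 / 2) →
      Tendsto (fun n : ℕ => (C3 n n n ⌊c * ((n : ℝ) - 1)⌋₊ : ℝ) / (n : ℝ) ^ 2) atTop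
          (nhds (-c ^ 2 + 3 * c - 3 / 2)) ∧
      Tendsto (fun n : ℕ => (S3 n n n ⌊c * ((n : ℝ) - 1)⌋₊ : ℝ) / (n : ℝ) ^ 3) atTop
          (nhds (-c ^ 3 / 3 + 3 * c ^ 2 / 2 - 3 * c / 2 + 1 / 2))) := by
  refine ⟨fun ⟨hc0, hc1⟩ => ?_, fun ⟨hc1, hc2⟩ => ?_⟩
  · have hmax : max (c - 1) 0 = 0 := max_eq_right (by linarith)
    constructor
    · convert tendsto_C3_floor_div hc0.le (by linarith) using 2
      rw [hmax]; ring
    · convert tendsto_S3_floor_div hc0.le (by linarith) using 2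
      rw [hmax]; ring
  · have hc0 : 0 ≤ c := zero_le_one.trans hc1.le
    have hmax : max (c - 1) 0 = c - 1 := max_eq_left (by linarith)
    constructor
    · convert tendsto_C3_floor_div hc0 (by linarith) using 2
      rw [hmax]; ring
    · convert tendsto_S3_floor_div hc0 (by linarith) using 2
      rw [hmax]; ring
end

section
/- Fix an integer d ≥ 1 and a real ε > 0. Then there is an N such that for every integer n ≥ N, the infinite-speed cop number of the d-fold Cartesian product G of copies of P_n satisfies c_∞(G) ≤ (1 + ε) · Σ_{k=0}^{⌊d/2⌋} (−1)^k · C(d,k) · C(⌊d(n+1)/2⌋ − kn − 1, d−1) (as real numbers), where C(·,·) denotes the binomial coefficient. -/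
open SimpleGraph

variable {V : Type*}

/-- Given cop positions `c`, the infinitely fast robber can move from `r` to `r'` iff
there is a walk in `G` from `r` to `r'` none of whose vertices (including the
endpoints) is occupied by a cop. -/
def RobberMove {k : ℕ} (G : SimpleGraph V) (c : Fin k → V) (r r' : V) : Prop :=
  ∃ w : G.Walk r r', ∀ v ∈ w.support, ∀ i, c i ≠ v

/-- `c'` is a legal move of the cops from positions `c`: each cop either stays put
or moves to an adjacent vertex. -/
def CopMove {k : ℕ} (G : SimpleGraph V) (c c' : Fin k → V) : Prop :=
  ∀ i, c' i = c i ∨ G.Adj (c i) (c' i)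

/-- With the cops at positions `c`, the robber at `r`, and the cops to move, the cops
can force capture of the infinitely fast robber after finitely many further rounds.
(If after the cops' move a cop stands on the robber's vertex, then the robber has no
legal move, so the hypothesis of `step` is vacuous: this is capture.  Well-foundedness
of the inductive predicate guarantees that capture occurs after finitely many rounds.) -/
inductive CopsCatch {k : ℕ} (G : SimpleGraph V) : (Fin k → V) → V → Prop
  | step (c : Fin k → V) (r : V) (c' : Fin k → V) (hmove : CopMove G c c')
      (h : ∀ r', RobberMove G c' r r' → CopsCatch G c' r') : CopsCatch G c r

/-- `k` cops have a winning strategy on `G` against an infinitely fast robber: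
they can choose initial positions such that, wherever the robber then starts,
they can force capture. -/
def CopsWin (G : SimpleGraph V) (k : ℕ) : Prop :=
  ∃ c₀ : Fin k → V, ∀ r₀ : V, CopsCatch G c₀ r₀

/-- The infinite-speed cop number of `G`: the least number of cops with a
winning strategy. -/
noncomputable def infCopNumber (G : SimpleGraph V) : ℕ :=
  sInf {k | CopsWin G k}


/-- The grid graph `P_{n 0} □ ⋯ □ P_{n (k-1)}`: vertices are tuples `(x₁, …, x_k)`
with `0 ≤ xᵢ ≤ nᵢ - 1`, two tuples being adjacent iff they differ by exactly `1`
in exactly one coordinate. -/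
def gridGraph {k : ℕ} (n : Fin k → ℕ) : SimpleGraph (∀ i, Fin (n i)) :=
  SimpleGraph.fromRel (fun x y => ∃ i, (y i : ℕ) = (x i : ℕ) + 1 ∧ ∀ j, j ≠ i → x j = y j)

/-! Grade the grid `{0, …, n-1}^d` by the coordinate sum, with ranks `0, …, R`, `R = d (n - 1)`.
By de Bruijn–Tengbergen–Kruyswijk it splits into symmetric chains: chains of adjacent vertices
through consecutive ranks `a, a + 1, …, R - a`, built dimension by dimension by cutting each
product of a chain with the path `P_n` into hooks. Every chain meets the middle level, so there
are at most as many chains as middle-level vertices. One cop per chain suffices: at time `t` the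
cops stand on all of level `t` (a cop whose chain lies entirely above or below level `t` waits at
the nearer end), and as level `t` separates the ranks below it from those above, the robber is
pushed up one rank per round until he is caught. The size of the middle level is computed by
inclusion–exclusion over the set of coordinates forced to be at least `n`. -/

open Finset

section Sweep

variable {G : SimpleGraph V} {ρ : V → ℕ}

theorem SimpleGraph.Walk.lt_of_forall_support_ne (hρ : ∀ ⦃u v⦄, G.Adj u v → ρ u ≤ ρ v + 1)
    {t : ℕ} {u v : V} (w : G.Walk u v) (hu : t ≤ ρ u) (hw : ∀ x ∈ w.support, ρ x ≠ t) :
    t < ρ v := by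
  induction w with
  | nil => exact lt_of_le_of_ne hu (hw _ (by simp)).symm
  | cons hab w ih =>
    have hne := hw _ (Walk.start_mem_support _)
    have := hρ hab
    exact ih (by omega) fun x hx => hw x (by simp [hx])

theorem copsWin_of_sweep (hρ : ∀ ⦃u v⦄, G.Adj u v → ρ u ≤ ρ v + 1) {R : ℕ} (hR : ∀ v, ρ v ≤ R)
    {k : ℕ} (f : ℕ → Fin k → V) (hf : ∀ t, CopMove G (f t) (f (t + 1)))
    (hcover : ∀ v, ∃ i, f (ρ v) i = v) : CopsWin G k := by
  have key : ∀ s t, R < t + s → ∀ c r, CopMove G c (f t) → t ≤ ρ r → CopsCatch G c r := by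
    intro s
    induction s with
    | zero => intro t ht c r _ hr; have := hR r; omega
    | succ s ih =>
      refine fun t ht c r hc hr => .step c r (f t) hc fun r' ⟨w, hw⟩ => ?_
      have hlevel : ∀ x ∈ w.support, ρ x ≠ t := fun x hx hxt => by
        obtain ⟨i, hi⟩ := hcover x
        exact hw x hx i (hxt ▸ hi)
      exact ih (t + 1) (by omega) _ r' (hf t) (w.lt_of_forall_support_ne hρ hr hlevel)
  exact ⟨f 0, fun r => key (R + 1) 0 (by omega) _ r (fun _ => .inl rfl) (Nat.zero_le _)⟩

end Sweep

structure SymmChainDecomp (G : SimpleGraph V) (ρ : V → ℕ) (R : ℕ) where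
  ι : Type
  [instFintype : Fintype ι]
  start : ι → ℕ
  chain : ι → ℕ → V
  two_mul_start_le (i : ι) : 2 * start i ≤ R
  rank_chain (i : ι) (t : ℕ) : start i ≤ t → t ≤ R - start i → ρ (chain i t) = t
  adj_chain (i : ι) (t : ℕ) : start i ≤ t → t + 1 ≤ R - start i →
    G.Adj (chain i t) (chain i (t + 1))
  exists_chain (v : V) : ∃ i, start i ≤ ρ v ∧ ρ v ≤ R - start i ∧ chain i (ρ v) = v
  chain_injective (i j : ι) (t : ℕ) : start i ≤ t → t ≤ R - start i → start j ≤ t →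
    t ≤ R - start j → chain i t = chain j t → i = j

namespace SymmChainDecomp

attribute [instance] instFintype

variable {G : SimpleGraph V} {ρ : V → ℕ} {R : ℕ} (S : SymmChainDecomp G ρ R)

theorem copsWin (hρ : ∀ ⦃u v⦄, G.Adj u v → ρ u ≤ ρ v + 1) : CopsWin G (Fintype.card S.ι) := by
  let e := (Fintype.equivFin S.ι).symm
  refine copsWin_of_sweep hρ (R := R) (fun v => ?_)
    (fun t j => S.chain (e j) (max (S.start (e j)) (min t (R - S.start (e j)))))
    (fun t j => ?_) (fun v => ?_)
  · obtain ⟨i, -, hi, -⟩ := S.exists_chain v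
    omega
  · dsimp only
    have := S.two_mul_start_le (e j)
    set a := S.start (e j)
    by_cases h : max a (min (t + 1) (R - a)) = max a (min t (R - a))
    · exact .inl (by rw [h])
    · refine .inr ?_
      rw [show max a (min (t + 1) (R - a)) = max a (min t (R - a)) + 1 by omega]
      exact S.adj_chain _ _ (by omega) (by omega)
  · obtain ⟨i, h₁, h₂, hv⟩ := S.exists_chain v
    refine ⟨e.symm i, ?_⟩
    rwa [Equiv.apply_symm_apply, max_eq_right (by omega), min_eq_left h₂]

theorem card_le_card_level [Fintype V] : Fintype.card S.ι ≤ #{v | ρ v = R / 2} := by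
  rw [← Fintype.card_coe]
  refine Fintype.card_le_of_injective (fun i => ⟨S.chain i (R / 2), ?_⟩) fun i j hij => ?_
  · have := S.two_mul_start_le i
    simpa using S.rank_chain i (R / 2) (by omega) (by omega)
  · have := S.two_mul_start_le i
    have := S.two_mul_start_le j
    exact S.chain_injective i j (R / 2) (by omega) (by omega) (by omega) (by omega)
      (congrArg Subtype.val hij)

end SymmChainDecomp

theorem infCopNumber_le_card_level [Fintype V] {G : SimpleGraph V} {ρ : V → ℕ} {R : ℕ}
    (S : SymmChainDecomp G ρ R) (hρ : ∀ ⦃u v⦄, G.Adj u v → ρ u ≤ ρ v + 1) :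
    infCopNumber G ≤ #{v | ρ v = R / 2} :=
  (Nat.sInf_le (S.copsWin hρ)).trans S.card_le_card_level

section Grid

variable {k : ℕ}

def gridRank {n : Fin k → ℕ} (x : ∀ i, Fin (n i)) : ℕ := ∑ i, (x i : ℕ)

theorem gridRank_eq_add_one {n : Fin k → ℕ} {x y : ∀ i, Fin (n i)} {i : Fin k}
    (hi : (y i : ℕ) = x i + 1) (hj : ∀ j, j ≠ i → x j = y j) : gridRank y = gridRank x + 1 := by
  unfold gridRank
  rw [← add_sum_erase _ _ (mem_univ i), ← add_sum_erase _ _ (mem_univ i), hi,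
    sum_congr rfl fun j hji => congrArg Fin.val (hj j (ne_of_mem_erase hji)).symm]
  ring

theorem gridGraph_adj_of_step {n : Fin k → ℕ} {x y : ∀ i, Fin (n i)} {i : Fin k}
    (hi : (y i : ℕ) = x i + 1) (hj : ∀ j, j ≠ i → x j = y j) : (gridGraph n).Adj x y :=
  ⟨fun h => by simp [h] at hi, .inl ⟨i, hi, hj⟩⟩

theorem gridRank_le_add_one_of_adj {n : Fin k → ℕ} ⦃x y : ∀ i, Fin (n i)⦄
    (h : (gridGraph n).Adj x y) : gridRank x ≤ gridRank y + 1 := by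
  obtain ⟨-, ⟨i, hi, hj⟩ | ⟨i, hi, hj⟩⟩ := h
  · have := gridRank_eq_add_one hi hj
    omega
  · have := gridRank_eq_add_one hi hj
    omega

variable {d n : ℕ}

theorem gridRank_snoc (u : Fin d → Fin n) (y : Fin n) :
    gridRank (Fin.snoc u y : Fin (d + 1) → Fin n) = gridRank u + y := by
  simp [gridRank, Fin.sum_univ_castSucc]

theorem gridGraph_adj_snoc_left {u u' : Fin d → Fin n} (y : Fin n)
    (h : (gridGraph fun _ : Fin d => n).Adj u u') :
    (gridGraph fun _ : Fin (d + 1) => n).Adj (Fin.snoc u y) (Fin.snoc u' y) := by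
  have step {a b : Fin d → Fin n} : (∃ i, (b i : ℕ) = a i + 1 ∧ ∀ j, j ≠ i → a j = b j) →
      (gridGraph fun _ : Fin (d + 1) => n).Adj (Fin.snoc a y) (Fin.snoc b y) := by
    rintro ⟨i, hi, hj⟩
    refine gridGraph_adj_of_step (i := i.castSucc) (by simpa using hi)
      (Fin.lastCases (by simp) fun j hji => ?_)
    simpa using hj j (by rintro rfl; exact hji rfl)
  obtain ⟨-, h | h⟩ := h
  exacts [step h, (step h).symm]

theorem gridGraph_adj_snoc_right (u : Fin d → Fin n) {y y' : Fin n} (h : (y' : ℕ) = y + 1) :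
    (gridGraph fun _ : Fin (d + 1) => n).Adj (Fin.snoc u y) (Fin.snoc u y') :=
  gridGraph_adj_of_step (i := Fin.last d) (by simpa using h)
    (Fin.lastCases (fun h => absurd rfl h) fun j _ => by simp)

end Grid

namespace SymmChainDecomp

variable {d n R : ℕ}

def gridZero (n : ℕ) : SymmChainDecomp (gridGraph fun _ : Fin 0 => n) gridRank 0 where
  ι := Unit
  start _ := 0
  chain _ _ := Fin.elim0
  two_mul_start_le _ := le_rfl
  rank_chain _ _ _ h := by simp [gridRank]; omega
  adj_chain _ _ _ h := by omega
  exists_chain v := ⟨(), by simp [gridRank, Subsingleton.elim v Fin.elim0]⟩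
  chain_injective _ _ _ _ _ _ _ _ := rfl

variable (hn : 1 ≤ n) (S : SymmChainDecomp (gridGraph fun _ : Fin d => n) gridRank R)

/-- Chain `c` times the path `P_n` is the rectangle `[0, R - 2a] × [0, n - 1]` (position on the
chain × last coordinate, `a = S.start c`), which splits into symmetric hooks: hook `j` rises from
`(j, 0)` to `(j, n - 1 - j)`, then runs along the chain to its end. `hook c j t` is the point of
rank `t` on hook `j`. -/
def hook (c : S.ι) (j t : ℕ) : Fin (d + 1) → Fin n :=
  Fin.snoc (S.chain c (t - min (t - (S.start c + j)) (n - 1 - j)))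
    ⟨min (t - (S.start c + j)) (n - 1 - j), by omega⟩

variable {hn S} {c : S.ι} {j : ℕ}

theorem gridRank_hook (hj : j ≤ min (R - 2 * S.start c) (n - 1)) {t : ℕ}
    (h₁ : S.start c + j ≤ t) (h₂ : t ≤ R + (n - 1) - (S.start c + j)) :
    gridRank (hook hn S c j t) = t := by
  have := S.two_mul_start_le c
  rw [hook, gridRank_snoc, S.rank_chain _ _ (by omega) (by omega)]
  dsimp only
  omega

theorem adj_hook {t : ℕ}
    (h₁ : S.start c + j ≤ t) (h₂ : t + 1 ≤ R + (n - 1) - (S.start c + j)) :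
    (gridGraph fun _ : Fin (d + 1) => n).Adj (hook hn S c j t) (hook hn S c j (t + 1)) := by
  have := S.two_mul_start_le c
  unfold hook
  by_cases hy : t + 1 - (S.start c + j) ≤ n - 1 - j
  · rw [show t + 1 - min (t + 1 - (S.start c + j)) (n - 1 - j) =
      t - min (t - (S.start c + j)) (n - 1 - j) by omega]
    exact gridGraph_adj_snoc_right _ (by dsimp only; omega)
  · have hy' : min (t + 1 - (S.start c + j)) (n - 1 - j) =
        min (t - (S.start c + j)) (n - 1 - j) := by omega
    simp only [hy', show t + 1 - min (t - (S.start c + j)) (n - 1 - j) =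
      t - min (t - (S.start c + j)) (n - 1 - j) + 1 by omega]
    exact gridGraph_adj_snoc_left _ (S.adj_chain _ _ (by omega) (by omega))

theorem exists_hook_eq (v : Fin (d + 1) → Fin n) : ∃ c j, j ≤ min (R - 2 * S.start c) (n - 1) ∧
    S.start c + j ≤ gridRank v ∧ gridRank v ≤ R + (n - 1) - (S.start c + j) ∧
    hook hn S c j (gridRank v) = v := by
  obtain ⟨c, h₁, h₂, hc⟩ := S.exists_chain (Fin.init v)
  have hv := gridRank_snoc (Fin.init v) (v (Fin.last d))
  rw [Fin.snoc_init_self] at hv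
  have hy := (v (Fin.last d)).isLt
  refine ⟨c, min (gridRank (Fin.init v) - S.start c) (n - 1 - v (Fin.last d)),
    by omega, by omega, by omega, ?_⟩
  conv_rhs => rw [← Fin.snoc_init_self v]
  unfold hook
  congr 1
  · convert hc using 2
    omega
  · ext
    dsimp only
    omega

theorem hook_injective {c c' : S.ι} {j j' t : ℕ} (hj : j ≤ min (R - 2 * S.start c) (n - 1))
    (hj' : j' ≤ min (R - 2 * S.start c') (n - 1))
    (h₁ : S.start c + j ≤ t) (h₂ : t ≤ R + (n - 1) - (S.start c + j))
    (h₁' : S.start c' + j' ≤ t) (h₂' : t ≤ R + (n - 1) - (S.start c' + j'))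
    (h : hook hn S c j t = hook hn S c' j' t) : c = c' ∧ j = j' := by
  have := S.two_mul_start_le c
  have := S.two_mul_start_le c'
  obtain ⟨hchain, hy⟩ := Fin.snoc_inj.1 h
  have hy := congrArg Fin.val hy
  dsimp only at hy
  rw [hy] at hchain
  obtain rfl := S.chain_injective _ _ _ (by omega) (by omega) (by omega) (by omega) hchain
  exact ⟨rfl, by omega⟩

variable (hn S) in
def snoc : SymmChainDecomp (gridGraph fun _ : Fin (d + 1) => n) gridRank (R + (n - 1)) where
  ι := Σ c : S.ι, Fin (min (R - 2 * S.start c) (n - 1) + 1)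
  start p := S.start p.1 + p.2
  chain p := hook hn S p.1 p.2
  two_mul_start_le p := by have := S.two_mul_start_le p.1; omega
  rank_chain p _ := gridRank_hook (Nat.lt_succ_iff.1 p.2.isLt)
  adj_chain _ _ := adj_hook
  exists_chain v := by
    obtain ⟨c, j, hj, h⟩ := exists_hook_eq (hn := hn) v
    exact ⟨⟨c, j, by omega⟩, h⟩
  chain_injective := by
    rintro ⟨c, j⟩ ⟨c', j'⟩ _ h₁ h₂ h₁' h₂' h
    obtain ⟨rfl, hj⟩ := hook_injective (Nat.lt_succ_iff.1 j.isLt) (Nat.lt_succ_iff.1 j'.isLt)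
      h₁ h₂ h₁' h₂' h
    rw [Fin.ext hj]

end SymmChainDecomp

theorem nonempty_symmChainDecomp_grid {n : ℕ} (hn : 1 ≤ n) (d : ℕ) :
    Nonempty (SymmChainDecomp (gridGraph fun _ : Fin d => n) gridRank (d * (n - 1))) := by
  induction d with
  | zero => rw [zero_mul]; exact ⟨SymmChainDecomp.gridZero n⟩
  | succ d ih => rw [Nat.succ_mul]; exact ⟨ih.some.snoc hn⟩

section LevelCount

open Finset.Nat

theorem card_antidiagonalTuple (d m : ℕ) : #(antidiagonalTuple d m) = d.multichoose m := by
  rw [← piAntidiag_univ_fin_eq_antidiagonalTuple, ← map_sym_eq_piAntidiag, card_map, sym_univ,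
    card_univ, Sym.card_sym_eq_multichoose, Fintype.card_fin]

variable (d n m : ℕ)

def exceedsAt (i : Fin d) : Finset (antidiagonalTuple d m) := {x | n ≤ x.1 i}

theorem mem_inf_exceedsAt {t : Finset (Fin d)} {x : antidiagonalTuple d m} :
    x ∈ t.inf (exceedsAt d n m) ↔ ∀ i ∈ t, n ≤ x.1 i := by
  simp [mem_inf, exceedsAt]

theorem card_inf_exceedsAt (t : Finset (Fin d)) :
    #(t.inf (exceedsAt d n m)) = if #t * n ≤ m then d.multichoose (m - #t * n) else 0 := by
  have hsum : ∑ i, (if i ∈ t then n else 0) = #t * n := by simp [sum_ite_mem]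
  split_ifs with htm
  · rw [← card_antidiagonalTuple]
    refine card_bij' (fun x _ i => x.1 i - if i ∈ t then n else 0)
      (fun y hy => ⟨fun i => y i + if i ∈ t then n else 0, ?_⟩) (fun x hx => ?_) (fun y hy => ?_)
      (fun x hx => ?_) (fun y hy => ?_)
    · rw [mem_antidiagonalTuple] at hy ⊢
      rw [sum_add_distrib, hy, hsum]
      omega
    · rw [mem_inf_exceedsAt] at hx
      rw [mem_antidiagonalTuple, sum_tsub_distrib _ fun i _ => ?_, mem_antidiagonalTuple.1 x.2,
        hsum]
      split_ifs with hi
      exacts [hx i hi, Nat.zero_le _]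
    · rw [mem_inf_exceedsAt]
      intro i hi
      simp [hi]
    · rw [mem_inf_exceedsAt] at hx
      ext i
      by_cases hi : i ∈ t
      · have := hx i hi
        simp only [hi, if_true]
        omega
      · simp [hi]
    · ext i
      simp
  · rw [card_eq_zero, eq_empty_iff_forall_notMem]
    intro x hx
    rw [mem_inf_exceedsAt] at hx
    have := calc #t * n = ∑ _i ∈ t, n := by rw [sum_const, smul_eq_mul]
      _ ≤ ∑ i ∈ t, x.1 i := sum_le_sum hx
      _ ≤ ∑ i, x.1 i := sum_le_sum_of_subset (subset_univ t)
      _ = m := mem_antidiagonalTuple.1 x.2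
    exact htm this

theorem card_gridRank_eq_card_inf_compl :
    #{v : Fin d → Fin n | gridRank v = m} = #(univ.inf fun i => (exceedsAt d n m i)ᶜ) := by
  have hmem {x : antidiagonalTuple d m} :
      x ∈ univ.inf (fun i => (exceedsAt d n m i)ᶜ) ↔ ∀ i, x.1 i < n := by
    simp [mem_inf, exceedsAt]
  refine card_bij' (fun v hv => ⟨fun i => v i, ?_⟩) (fun x hx i => ⟨x.1 i, hmem.1 hx i⟩)
    (fun v _ => hmem.2 fun i => (v i).isLt) (fun x _ => ?_) (fun _ _ => rfl) (fun _ _ => rfl)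
  · simpa [mem_antidiagonalTuple, gridRank] using hv
  · simpa [gridRank] using mem_antidiagonalTuple.1 x.2

theorem card_gridRank_eq_sum :
    (#{v : Fin d → Fin n | gridRank v = m} : ℤ) = ∑ k ∈ range (d + 1),
      (-1) ^ k * d.choose k * if k * n ≤ m then (d.multichoose (m - k * n) : ℤ) else 0 := by
  rw [card_gridRank_eq_card_inf_compl, inclusion_exclusion_card_inf_compl]
  simp only [card_inf_exceedsAt]
  rw [sum_powerset_apply_card (fun k => (-1 : ℤ) ^ k *
    ((if k * n ≤ m then d.multichoose (m - k * n) else 0 : ℕ) : ℤ)), card_univ, Fintype.card_fin]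
  refine sum_congr rfl fun k _ => ?_
  push_cast
  ring

end LevelCount

section MiddleLevel

variable {d n : ℕ}

theorem mul_sub_one_div_two_lt_mul (hn : 1 ≤ n) {k : ℕ} (hk : d / 2 < k) :
    d * (n - 1) / 2 < k * n := by
  have h₁ : (d + 1) * n ≤ 2 * k * n := Nat.mul_le_mul_right n (by omega)
  have h₂ : d * (n - 1) + d = d * n := by
    obtain ⟨n, rfl⟩ := Nat.exists_eq_add_of_le' hn
    simp only [Nat.add_sub_cancel]
    ring
  have h₃ : (d + 1) * n = d * n + n := by ring
  have h₄ : 2 * k * n = 2 * (k * n) := by ring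
  omega

theorem ite_multichoose_eq_choose (hd : 1 ≤ d) (hn : 1 ≤ n) {k : ℕ} (hk : k ≤ d / 2) :
    (if k * n ≤ d * (n - 1) / 2 then d.multichoose (d * (n - 1) / 2 - k * n) else 0) =
      (d * (n + 1) / 2 - k * n - 1).choose (d - 1) := by
  have h : d * (n + 1) = d * (n - 1) + 2 * d := by
    obtain ⟨n, rfl⟩ := Nat.exists_eq_add_of_le' hn
    simp only [Nat.add_sub_cancel]
    ring
  rw [h]
  generalize d * (n - 1) = R
  split_ifs with hkn
  · rw [Nat.multichoose_eq, show (R + 2 * d) / 2 - k * n - 1 = d - 1 + (R / 2 - k * n) by omega,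
      Nat.choose_symm_add, show d - 1 + (R / 2 - k * n) = d + (R / 2 - k * n) - 1 by omega]
  · have : k ≠ 0 := by rintro rfl; simp at hkn
    rw [Nat.choose_eq_zero_of_lt (by omega)]

theorem card_middle_gridRank (hd : 1 ≤ d) (hn : 1 ≤ n) :
    (#{v : Fin d → Fin n | gridRank v = d * (n - 1) / 2} : ℝ) =
      ∑ k ∈ range (d / 2 + 1), (-1 : ℝ) ^ k * (d.choose k : ℝ) *
        ((d * (n + 1) / 2 - k * n - 1).choose (d - 1) : ℝ) := by
  have := congrArg (Int.cast : ℤ → ℝ) (card_gridRank_eq_sum d n (d * (n - 1) / 2))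
  push_cast at this
  rw [this, ← sum_subset (range_subset_range.2 (by omega : d / 2 + 1 ≤ d + 1))]
  · refine sum_congr rfl fun k hk => ?_
    rw [← ite_multichoose_eq_choose hd hn (by simpa [Nat.lt_succ_iff] using hk)]
    push_cast
    rfl
  · intro k _ hk
    rw [if_neg (mul_sub_one_div_two_lt_mul hn (by simpa using hk)).not_ge, mul_zero]

end MiddleLevel

/-- Fix an integer `d ≥ 1` and a real `ε > 0`.  For all sufficiently
large `n`, the infinite-speed cop number of the `d`-fold Cartesian product `G` of
copies of `P_n` (the `d`-dimensional grid) satisfies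
`c_∞(G) ≤ (1 + ε) · Σ_{k=0}^{⌊d/2⌋} (-1)^k C(d,k) C(⌊d(n+1)/2⌋ - kn - 1, d-1)`. -/
theorem infCopNumber_gridD_upper (d : ℕ) (hd : 1 ≤ d) (ε : ℝ) (hε : 0 < ε) :
    ∃ N : ℕ, ∀ n : ℕ, N ≤ n →
      (infCopNumber (gridGraph (fun _ : Fin d => n)) : ℝ) ≤
        (1 + ε) * ∑ k ∈ Finset.range (d / 2 + 1),
          (-1 : ℝ) ^ k * (d.choose k : ℝ) *
            ((d * (n + 1) / 2 - k * n - 1).choose (d - 1) : ℝ) := by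
  refine ⟨1, fun n hn => ?_⟩
  obtain ⟨S⟩ := nonempty_symmChainDecomp_grid hn d
  rw [← card_middle_gridRank hd hn]
  calc (infCopNumber (gridGraph fun _ : Fin d => n) : ℝ)
      ≤ #{v : Fin d → Fin n | gridRank v = d * (n - 1) / 2} := by
        exact_mod_cast infCopNumber_le_card_level S gridRank_le_add_one_of_adj
    _ ≤ (1 + ε) * #{v : Fin d → Fin n | gridRank v = d * (n - 1) / 2} :=
        le_mul_of_one_le_left (Nat.cast_nonneg _) (by linarith)
end
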